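/- Let ν be a finite Borel measure on a bounded set J ⊂ ℂ that is δ-Ahlfors regular: there are C ≥ 1 and r₀ > 0 with C⁻¹ r^δ ≤ ν(D(z,r) ∩ J) ≤ C r^δ for all z ∈ J and 0 < r < r₀. Let γ : D(y,2R) → ℂ be univalent holomorphic, and suppose γ restricted to D(y,R) is bi-Lipschitz with constants D⁻¹|γ'(y)| and D|γ'(y)| (D ≥ 1). Let H ⊂ J ∩ D(y,R) be a Borel set containing D(y, r_*) ∩ J for some 0 < r_* < r₀, with γ(H) ⊂ J. Then there exist constants C₁, C₂ > 0 depending only on C, D, δ, r_*, R (not on γ) such that C₁ |γ'(y)|^δ ≤ ν(γ(H)) ≤ C₂ |γ'(y)|^δ. -/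

import Mathlib

open Metric Set MeasureTheory
open scoped ENNReal

private lemma helperDiv {N : ℝ≥0∞} {a b : ℝ} (ha : 0 < a)
    (h : N * ENNReal.ofReal a ≤ ENNReal.ofReal b) : N ≤ ENNReal.ofReal (b / a) := by
  rw [ENNReal.ofReal_div_of_pos ha]
  rw [ENNReal.le_div_iff_mul_le (Or.inl (ENNReal.ofReal_pos.2 ha).ne')
    (Or.inl ENNReal.ofReal_ne_top)]
  exact h

/-- A bounded set admits a finite `t`-separated `2t`-net with centers in the set. -/
private lemma sep_net {A : Set ℂ} (hA : Bornology.IsBounded A) {t : ℝ} (ht : 0 < t) :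
    ∃ F : Finset ℂ, ↑F ⊆ A ∧ (A ⊆ ⋃ z ∈ F, ball z (2 * t)) ∧
      ((F : Set ℂ).Pairwise fun a b => t ≤ dist a b) := by
  classical
  have htb : TotallyBounded A :=
    (hA.isCompact_closure.totallyBounded).subset subset_closure
  obtain ⟨T, hTA, hTfin, hTcov⟩ :=
    totallyBounded_iff_subset.mp htb _ (Metric.dist_mem_uniformity ht)
  let F₀ : Finset ℂ := hTfin.toFinset
  have hF₀A : ↑F₀ ⊆ A := by simpa [F₀] using hTA
  -- pick a separated subset of maximal cardinality
  let 𝒮 : Finset (Finset ℂ) :=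
    F₀.powerset.filter fun G => (G : Set ℂ).Pairwise fun a b => t ≤ dist a b
  have hemp : (∅ : Finset ℂ) ∈ 𝒮 := by
    simp [𝒮, Finset.empty_mem_powerset]
  obtain ⟨G, hG𝒮, hGmax⟩ := Finset.exists_max_image 𝒮 Finset.card ⟨∅, hemp⟩
  have hGsub : G ⊆ F₀ := Finset.mem_powerset.mp (Finset.mem_filter.mp hG𝒮).1
  have hGsep : (G : Set ℂ).Pairwise fun a b => t ≤ dist a b :=
    (Finset.mem_filter.mp hG𝒮).2
  have hnear : ∀ w ∈ F₀, ∃ z ∈ G, dist w z < t := by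
    intro w hw
    by_contra hcon
    push_neg at hcon
    have hwG : w ∉ G := by
      intro hwG
      have := hcon w hwG
      simp at this
      linarith
    have hins : insert w G ∈ 𝒮 := by
      refine Finset.mem_filter.mpr ⟨Finset.mem_powerset.mpr ?_, ?_⟩
      · exact Finset.insert_subset hw hGsub
      · rw [Finset.coe_insert]
        refine Set.pairwise_insert.mpr ⟨hGsep, fun b hb _ => ⟨hcon b hb, ?_⟩⟩
        rw [dist_comm]
        exact hcon b hb
    have := hGmax _ hins
    rw [Finset.card_insert_of_notMem hwG] at this
    omega
  refine ⟨G, fun z hz => hF₀A (hGsub hz), ?_, hGsep⟩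
  intro a ha
  obtain ⟨w, hwT, hw⟩ := Set.mem_iUnion₂.mp (hTcov ha)
  have hwF₀ : w ∈ F₀ := by simpa [F₀] using hwT
  obtain ⟨z, hzG, hz⟩ := hnear w hwF₀
  refine Set.mem_iUnion₂.mpr ⟨z, hzG, ?_⟩
  have hw' : dist a w < t := hw
  have : dist a z < 2 * t := by
    calc dist a z ≤ dist a w + dist w z := dist_triangle _ _ _
      _ < 2 * t := by linarith
  exact mem_ball.mpr this

/-- Packing bound: a `t`-separated finite set inside `ball y ρ` has cardinality at most
`(ρ + t/2)^2 / (t/2)^2`, via area. -/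
private lemma pack {F : Finset ℂ} {y : ℂ} {ρ t : ℝ} (ht : 0 < t)
    (hF : ↑F ⊆ ball y ρ) (hsep : (F : Set ℂ).Pairwise fun a b => t ≤ dist a b) :
    (F.card : ℝ≥0∞) ≤ ENNReal.ofReal ((ρ + t / 2) ^ 2 / (t / 2) ^ 2) := by
  rcases F.eq_empty_or_nonempty with rfl | ⟨z₀, hz₀⟩
  · simp
  have hρ : 0 < ρ := lt_of_le_of_lt dist_nonneg (mem_ball.mp (hF hz₀))
  have hdisj : (↑F : Set ℂ).PairwiseDisjoint fun z => ball z (t / 2) := by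
    intro a ha b hb hab
    exact ball_disjoint_ball (by linarith [hsep ha hb hab])
  have hvol : volume (⋃ z ∈ F, ball z (t / 2)) = ∑ z ∈ F, volume (ball z (t / 2)) :=
    measure_biUnion_finset hdisj fun z _ => measurableSet_ball
  have hsub : (⋃ z ∈ F, ball z (t / 2)) ⊆ ball y (ρ + t / 2) := by
    intro x hx
    obtain ⟨z, hzF, hz⟩ := Set.mem_iUnion₂.mp hx
    have h1 : dist x z < t / 2 := hz
    have h2 : dist z y < ρ := hF hzF
    exact mem_ball.mpr (lt_of_le_of_lt (dist_triangle x z y) (by linarith))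
  have hle : (F.card : ℝ≥0∞) * volume (ball y (t / 2)) ≤ volume (ball y (ρ + t / 2)) := by
    have : ∑ z ∈ F, volume (ball z (t / 2)) ≤ volume (ball y (ρ + t / 2)) := by
      rw [← hvol]; exact measure_mono hsub
    calc (F.card : ℝ≥0∞) * volume (ball y (t / 2))
        = ∑ _z ∈ F, volume (ball y (t / 2)) := by
          rw [Finset.sum_const, nsmul_eq_mul]
      _ = ∑ z ∈ F, volume (ball z (t / 2)) := by
          refine Finset.sum_congr rfl fun z _ => ?_
          rw [Complex.volume_ball, Complex.volume_ball]
      _ ≤ volume (ball y (ρ + t / 2)) := this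
  rw [Complex.volume_ball, Complex.volume_ball] at hle
  have hπ : (NNReal.pi : ℝ≥0∞) ≠ 0 := ENNReal.coe_ne_zero.mpr NNReal.pi_ne_zero
  have hπt : (NNReal.pi : ℝ≥0∞) ≠ ∞ := ENNReal.coe_ne_top
  have hle' : (F.card : ℝ≥0∞) * ENNReal.ofReal ((t / 2) ^ 2) ≤
      ENNReal.ofReal ((ρ + t / 2) ^ 2) := by
    rw [ENNReal.ofReal_pow (by linarith), ENNReal.ofReal_pow (by positivity)]
    refine (ENNReal.mul_le_mul_iff_left hπ hπt).mp ?_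
    calc (F.card : ℝ≥0∞) * ENNReal.ofReal (t / 2) ^ 2 * NNReal.pi
        = (F.card : ℝ≥0∞) * (ENNReal.ofReal (t / 2) ^ 2 * NNReal.pi) := by ring
      _ ≤ ENNReal.ofReal (ρ + t / 2) ^ 2 * NNReal.pi := hle
  exact helperDiv (by positivity) hle'

/-- The measure of `ball y ρ ∩ J` is bounded by a constant depending only on
`C, δ, r₀, ρ`, given the upper Ahlfors bound. -/
private lemma grid {ν : Measure ℂ} {J : Set ℂ} {C δ r₀ : ℝ}
    (hC : 0 < C) (hr₀ : 0 < r₀)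
    (hup : ∀ z ∈ J, ∀ r : ℝ, 0 < r → r < r₀ → ν (ball z r ∩ J) ≤ ENNReal.ofReal (C * r ^ δ))
    (y : ℂ) (ρ : ℝ) :
    ν (ball y ρ ∩ J) ≤
      ENNReal.ofReal ((ρ + r₀ / 8) ^ 2 / (r₀ / 8) ^ 2 * (C * (r₀ / 2) ^ δ)) := by
  have ht : (0 : ℝ) < r₀ / 4 := by linarith
  obtain ⟨F, hFA, hFcov, hFsep⟩ :=
    sep_net ((isBounded_ball (x := y) (r := ρ)).subset inter_subset_left) ht
  have h24 : 2 * (r₀ / 4) = r₀ / 2 := by ring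
  have hstep1 : ν (ball y ρ ∩ J) ≤ ∑ z ∈ F, ν (ball z (r₀ / 2) ∩ J) := by
    refine le_trans (measure_mono ?_) (measure_biUnion_finset_le F _)
    intro x hx
    obtain ⟨z, hzF, hz⟩ := Set.mem_iUnion₂.mp (hFcov hx)
    rw [h24] at hz
    exact Set.mem_iUnion₂.mpr ⟨z, hzF, hz, hx.2⟩
  have hstep2 : ∑ z ∈ F, ν (ball z (r₀ / 2) ∩ J) ≤
      (F.card : ℝ≥0∞) * ENNReal.ofReal (C * (r₀ / 2) ^ δ) := by
    rw [← nsmul_eq_mul]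
    refine Finset.sum_le_card_nsmul F _ _ fun z hz => ?_
    exact hup z (hFA hz).2 _ (by linarith) (by linarith)
  have hcard : (F.card : ℝ≥0∞) ≤ ENNReal.ofReal ((ρ + r₀ / 8) ^ 2 / (r₀ / 8) ^ 2) := by
    refine pack ht (fun z hz => (hFA hz).1) hFsep |>.trans ?_
    have h1 : r₀ / 4 / 2 = r₀ / 8 := by ring
    rw [h1]
  calc ν (ball y ρ ∩ J) ≤ (F.card : ℝ≥0∞) * ENNReal.ofReal (C * (r₀ / 2) ^ δ) :=
        hstep1.trans hstep2
    _ ≤ ENNReal.ofReal ((ρ + r₀ / 8) ^ 2 / (r₀ / 8) ^ 2) *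
        ENNReal.ofReal (C * (r₀ / 2) ^ δ) := by
        exact mul_le_mul_left hcard _
    _ = ENNReal.ofReal ((ρ + r₀ / 8) ^ 2 / (r₀ / 8) ^ 2 * (C * (r₀ / 2) ^ δ)) := by
        rw [← ENNReal.ofReal_mul (by positivity)]

set_option maxHeartbeats 1000000 in
/-- Let `ν` be a finite Borel measure on a bounded set `J ⊆ ℂ` that is
`δ`-Ahlfors regular at scales below `r₀` with constant `C`.  Let `γ` be univalent
holomorphic on `D(y, 2R)` and bi-Lipschitz on `D(y, R)` with constants `D⁻¹|γ'(y)|` and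
`D|γ'(y)|`, let `H ⊆ J ∩ D(y, R)` be a Borel set containing `D(y, r⋆) ∩ J`
(`0 < r⋆ < r₀`, `r⋆ ≤ R`, `y ∈ J`) and satisfying `γ(H) ⊆ J`.  Then there are constants
`C₁, C₂ > 0` depending only on `C, D, δ, r⋆, r₀, R` (not on `ν, J, y, γ, H`) with
`C₁ |γ'(y)|^δ ≤ ν (γ(H)) ≤ C₂ |γ'(y)|^δ`. -/
theorem stmt15 (C D δ rs r₀ R : ℝ)
    (hC : 1 ≤ C) (hD : 1 ≤ D) (hδ : 0 < δ) (hrs : 0 < rs) (hrsr₀ : rs < r₀)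
    (hrsR : rs ≤ R) (hR : 0 < R) :
    ∃ C₁ C₂ : ℝ, 0 < C₁ ∧ 0 < C₂ ∧
      ∀ (ν : Measure ℂ), IsFiniteMeasure ν →
      ∀ J : Set ℂ, Bornology.IsBounded J →
        (∀ z ∈ J, ∀ r : ℝ, 0 < r → r < r₀ →
          ENNReal.ofReal (C⁻¹ * r ^ δ) ≤ ν (ball z r ∩ J) ∧
          ν (ball z r ∩ J) ≤ ENNReal.ofReal (C * r ^ δ)) →
      ∀ y ∈ J, ∀ γ : ℂ → ℂ,
        DifferentiableOn ℂ γ (ball y (2 * R)) → InjOn γ (ball y (2 * R)) →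
        (∀ u ∈ ball y R, ∀ v ∈ ball y R,
          D⁻¹ * ‖deriv γ y‖ * dist u v ≤ dist (γ u) (γ v) ∧
          dist (γ u) (γ v) ≤ D * ‖deriv γ y‖ * dist u v) →
      ∀ H : Set ℂ, MeasurableSet H → H ⊆ J ∩ ball y R → ball y rs ∩ J ⊆ H →
        γ '' H ⊆ J →
        ENNReal.ofReal (C₁ * ‖deriv γ y‖ ^ δ) ≤ ν (γ '' H) ∧
        ν (γ '' H) ≤ ENNReal.ofReal (C₂ * ‖deriv γ y‖ ^ δ) := by
  have hC0 : (0 : ℝ) < C := lt_of_lt_of_le one_pos hC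
  have hD0 : (0 : ℝ) < D := lt_of_lt_of_le one_pos hD
  have hr₀ : (0 : ℝ) < r₀ := hrs.trans hrsr₀
  set P : ℝ := ((R + r₀) + r₀ / 8) ^ 2 / (r₀ / 8) ^ 2 with hPdef
  set K : ℝ := P * (C * (r₀ / 2) ^ δ) with hKdef
  have hPpos : 0 < P := by
    apply div_pos <;> positivity
  have hKpos : 0 < K :=
    mul_pos hPpos (mul_pos hC0 (Real.rpow_pos_of_pos (by linarith) δ))
  refine ⟨(rs / (8 * D)) ^ δ / C ^ 3, C ^ 2 * K * (6 * D) ^ δ,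
    div_pos (Real.rpow_pos_of_pos (div_pos hrs (by linarith)) δ) (pow_pos hC0 3),
    mul_pos (mul_pos (pow_pos hC0 2) hKpos) (Real.rpow_pos_of_pos (by linarith) δ), ?_⟩
  intro ν hfin J hJb hAhl y hyJ γ hdiff hinj hbil H hHm hHsub hballH hγH
  haveI := hfin
  set L : ℝ := ‖deriv γ y‖ with hLdef
  -- positivity of L
  have hL : 0 < L := by
    rcases lt_or_eq_of_le (norm_nonneg (deriv γ y)) with h | h
    · exact h
    · exfalso
      have hL0 : L = 0 := h.symm
      set v : ℂ := y + (R / 2 : ℝ) with hvdef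
      have hvy : dist v y = R / 2 := by
        rw [Complex.dist_eq, hvdef]
        simp only [add_sub_cancel_left, Complex.norm_real, Real.norm_eq_abs]
        rw [abs_of_pos (by linarith : (0:ℝ) < R / 2)]
      have hv : v ∈ ball y R := by
        rw [mem_ball, hvy]; linarith
      have hy' : y ∈ ball y R := mem_ball_self hR
      have := (hbil y hy' v hv).2
      rw [hL0] at this
      simp only [mul_zero, zero_mul] at this
      have hyv : γ y = γ v := by
        have := le_antisymm this dist_nonneg
        exact dist_eq_zero.mp this
      have hsub : ball y R ⊆ ball y (2 * R) := ball_subset_ball (by linarith)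
      have : y = v := hinj (hsub hy') (hsub hv) hyv
      rw [hvdef] at this
      have : (R / 2 : ℂ) = 0 := by
        have := congrArg (· - y) this
        simpa using this.symm
      have : (R / 2 : ℝ) = 0 := by exact_mod_cast this
      linarith
  have hHR : H ⊆ ball y R := fun x hx => (hHsub hx).2
  have hHJ : H ⊆ J := fun x hx => (hHsub hx).1
  have hDL : 0 < D * L := mul_pos hD0 hL
  constructor
  · -- lower bound
    by_contra hcon
    push_neg at hcon
    obtain ⟨U, hUsup, hUopen, hUlt⟩ :=
      Set.exists_isOpen_lt_of_lt (μ := ν) (γ '' H) _ hcon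
    set cap : ℝ := min (L * r₀ / (16 * D)) (r₀ / 2) with hcapdef
    have hcap0 : 0 < cap := lt_min (by positivity) (by linarith)
    have hcapr₀ : cap < r₀ := lt_of_le_of_lt (min_le_right _ _) (by linarith)
    set A : Set ℂ := ball y rs ∩ J with hAdef
    have hAJ : A ⊆ J := inter_subset_right
    have hAH : A ⊆ H := hballH
    have hAball : A ⊆ ball y R := fun x hx =>
      (ball_subset_ball hrsR) hx.1
    have hSU : γ '' A ⊆ U := (Set.image_mono hAH).trans hUsup
    have hSJ : γ '' A ⊆ J := (Set.image_mono hAH).trans hγH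
    have hrad : ∀ w ∈ γ '' A, ∃ ρ : ℝ, 0 < ρ ∧ ρ ≤ cap ∧ closedBall w ρ ⊆ U := by
      intro w hw
      obtain ⟨ε, hε, hball⟩ := Metric.isOpen_iff.mp hUopen w (hSU hw)
      refine ⟨min (ε / 2) cap, lt_min (by linarith) hcap0, min_le_right _ _, ?_⟩
      exact (closedBall_subset_ball (lt_of_le_of_lt (min_le_left _ _) (by linarith))).trans hball
    choose! r hr0 hrcap hrU using hrad
    obtain ⟨u, huS, hudisj, hucov⟩ :=
      Vitali.exists_disjoint_subfamily_covering_enlargement_closedBall (γ '' A) id r cap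
        (fun a ha => hrcap a ha) 4 (by norm_num)
    have hmemJ : ∀ b ∈ u, b ∈ J := fun b hb => hSJ (huS hb)
    have hr0' : ∀ b ∈ u, 0 < r b := fun b hb => hr0 b (huS hb)
    have hrr₀ : ∀ b ∈ u, r b < r₀ := fun b hb => lt_of_le_of_lt (hrcap b (huS hb)) hcapr₀
    -- countability of u
    have hucnt : u.Countable := by
      have hmeas : ∀ i : ↥u, MeasurableSet (closedBall (i : ℂ) (r i)) :=
        fun i => measurableSet_closedBall
      have hdisj' : Pairwise (Function.onFun Disjoint fun i : ↥u => closedBall (i : ℂ) (r i)) := by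
        intro i j hij
        exact hudisj i.2 j.2 (Subtype.coe_injective.ne hij)
      have h1 := MeasureTheory.Measure.countable_meas_pos_of_disjoint_iUnion
        (μ := ν) hmeas hdisj'
      have h2 : {i : ↥u | 0 < ν (closedBall (i : ℂ) (r i))} = Set.univ := by
        refine Set.eq_univ_of_forall fun i => ?_
        have hb := i.2
        calc (0 : ℝ≥0∞) < ENNReal.ofReal (C⁻¹ * (r i) ^ δ) := by
              refine ENNReal.ofReal_pos.mpr ?_
              have := hr0' _ hb
              positivity
          _ ≤ ν (ball (i : ℂ) (r i) ∩ J) :=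
              (hAhl _ (hmemJ _ hb) _ (hr0' _ hb) (hrr₀ _ hb)).1
          _ ≤ ν (closedBall (i : ℂ) (r i)) :=
              measure_mono (inter_subset_left.trans ball_subset_closedBall)
      rw [h2] at h1
      have : Countable ↥u := Set.countable_univ_iff.mp h1
      exact Set.countable_coe_iff.mpr this
    -- preimages
    have hpre' : ∀ w ∈ γ '' A, ∃ a, a ∈ A ∧ γ a = w := by
      rintro w ⟨a, ha, rfl⟩; exact ⟨a, ha, rfl⟩
    choose! pre hpreA hpreγ using hpre'
    -- covering of A by pulled-back balls
    have hAcov : A ⊆ ⋃ b ∈ u, closedBall (pre b) (4 * D * r b / L) := by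
      intro a ha
      have haS : γ a ∈ γ '' A := mem_image_of_mem _ ha
      obtain ⟨b, hbu, hb⟩ := hucov (γ a) haS
      have hγab : dist (γ a) b ≤ 4 * r b := by
        have h1 : γ a ∈ closedBall (γ a) (r (γ a)) := mem_closedBall_self (hr0 _ haS).le
        have h2 := hb h1
        simpa [mem_closedBall] using h2
      have hbS : b ∈ γ '' A := huS hbu
      have hpA : pre b ∈ A := hpreA b hbS
      have hpγ : γ (pre b) = b := hpreγ b hbS
      have hco := (hbil a (hAball ha) (pre b) (hAball hpA)).1
      rw [hpγ] at hco
      have hdist : dist a (pre b) ≤ 4 * D * r b / L := by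
        have h3 : D⁻¹ * L * dist a (pre b) ≤ 4 * r b := hco.trans hγab
        rw [le_div_iff₀ hL]
        have h4 := mul_le_mul_of_nonneg_left h3 hD0.le
        have h5 : D * (D⁻¹ * L * dist a (pre b)) = L * dist a (pre b) := by
          field_simp
        nlinarith
      exact Set.mem_iUnion₂.mpr ⟨b, hbu, mem_closedBall.mpr hdist⟩
    -- measure chain
    have hchain1 : ν A ≤ ∑' b : ↥u, ν (closedBall (pre b) (4 * D * r b / L) ∩ J) := by
      refine le_trans (measure_mono ?_) (measure_biUnion_le ν hucnt (fun b => closedBall (pre b) (4 * D * r b / L) ∩ J))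
      intro x hx
      obtain ⟨b, hbu, hb⟩ := Set.mem_iUnion₂.mp (hAcov hx)
      exact Set.mem_iUnion₂.mpr ⟨b, hbu, hb, hAJ hx⟩
    have hchain2 : ∀ b ∈ u, ν (closedBall (pre b) (4 * D * r b / L) ∩ J) ≤
        ENNReal.ofReal (C ^ 2 * (8 * D / L) ^ δ) * ENNReal.ofReal (C⁻¹ * r b ^ δ) := by
      intro b hbu
      have hbS : b ∈ γ '' A := huS hbu
      have hrb0 : 0 < r b := hr0 b hbS
      have hradpos : (0 : ℝ) < 4 * D * r b / L := by positivity
      have hsub8 : closedBall (pre b) (4 * D * r b / L) ⊆ ball (pre b) (8 * D * r b / L) := by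
        apply closedBall_subset_ball
        rw [div_lt_div_iff₀ hL hL]
        nlinarith
      have hsmall : 8 * D * r b / L < r₀ := by
        have h1 : r b ≤ L * r₀ / (16 * D) := (hrcap b hbS).trans (min_le_left _ _)
        rw [div_lt_iff₀ hL]
        calc 8 * D * r b ≤ 8 * D * (L * r₀ / (16 * D)) := by
              exact mul_le_mul_of_nonneg_left h1 (by positivity)
          _ = r₀ / 2 * L := by field_simp; ring
          _ < r₀ * L := by nlinarith
      have hup := (hAhl (pre b) (hAJ (hpreA b hbS)) _ (by positivity) hsmall).2
      refine le_trans (measure_mono (Set.inter_subset_inter_left J hsub8)) (hup.trans ?_)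
      rw [← ENNReal.ofReal_mul (by positivity)]
      apply ENNReal.ofReal_le_ofReal
      have hrpow : (8 * D * r b / L) ^ δ = (8 * D / L) ^ δ * r b ^ δ := by
        rw [← Real.mul_rpow (by positivity) hrb0.le]
        congr 1
        field_simp
        try ring
      rw [hrpow]
      have : C ^ 2 * (8 * D / L) ^ δ * (C⁻¹ * r b ^ δ)
          = (C ^ 2 * C⁻¹) * ((8 * D / L) ^ δ * r b ^ δ) := by ring
      rw [this]
      have hCC : C ^ 2 * C⁻¹ = C := by field_simp [pow_two]
      rw [hCC]
    have hchain3 : ∀ b ∈ u, ENNReal.ofReal (C⁻¹ * r b ^ δ) ≤ ν (ball b (r b) ∩ J) :=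
      fun b hb => (hAhl b (hmemJ b hb) _ (hr0' b hb) (hrr₀ b hb)).1
    have hchain4 : ∑' b : ↥u, ν (ball (b : ℂ) (r b) ∩ J) ≤ ν U := by
      have hball : ∀ b : ↥u, ν (ball (b : ℂ) (r b) ∩ J) ≤ ν (closedBall (b : ℂ) (r b)) :=
        fun b => measure_mono (inter_subset_left.trans ball_subset_closedBall)
      calc ∑' b : ↥u, ν (ball (b : ℂ) (r b) ∩ J)
          ≤ ∑' b : ↥u, ν (closedBall (b : ℂ) (r b)) := ENNReal.tsum_le_tsum hball
        _ = ν (⋃ b ∈ u, closedBall b (r b)) :=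
            (measure_biUnion hucnt hudisj fun b _ => measurableSet_closedBall).symm
        _ ≤ ν U := measure_mono (Set.iUnion₂_subset fun b hb => hrU b (huS hb))
    have hmain : ν A ≤ ENNReal.ofReal (C ^ 2 * (8 * D / L) ^ δ) * ν U := by
      calc ν A ≤ ∑' b : ↥u, ν (closedBall (pre b) (4 * D * r b / L) ∩ J) := hchain1
        _ ≤ ∑' b : ↥u, ENNReal.ofReal (C ^ 2 * (8 * D / L) ^ δ) *
            ENNReal.ofReal (C⁻¹ * r (b : ℂ) ^ δ) :=
            ENNReal.tsum_le_tsum fun b : ↥u => hchain2 b b.2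
        _ = ENNReal.ofReal (C ^ 2 * (8 * D / L) ^ δ) *
            ∑' b : ↥u, ENNReal.ofReal (C⁻¹ * r (b : ℂ) ^ δ) := ENNReal.tsum_mul_left
        _ ≤ ENNReal.ofReal (C ^ 2 * (8 * D / L) ^ δ) *
            ∑' b : ↥u, ν (ball (b : ℂ) (r b) ∩ J) := by
            exact mul_le_mul_right (ENNReal.tsum_le_tsum fun b : ↥u => hchain3 b b.2) _
        _ ≤ ENNReal.ofReal (C ^ 2 * (8 * D / L) ^ δ) * ν U := mul_le_mul_right hchain4 _
    have hlow : ENNReal.ofReal (C⁻¹ * rs ^ δ) ≤ ν A :=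
      (hAhl y hyJ rs hrs hrsr₀).1
    have hfact : C ^ 2 * (8 * D / L) ^ δ * ((rs / (8 * D)) ^ δ / C ^ 3 * L ^ δ)
        = C⁻¹ * rs ^ δ := by
      have h1 : (8 * D / L) ^ δ * ((rs / (8 * D)) ^ δ * L ^ δ) = rs ^ δ := by
        rw [← Real.mul_rpow (by positivity) hL.le, ← Real.mul_rpow (by positivity) (by positivity)]
        congr 1
        field_simp
        try ring
      have h2 : C ^ 2 * (8 * D / L) ^ δ * ((rs / (8 * D)) ^ δ / C ^ 3 * L ^ δ)
          = (C ^ 2 / C ^ 3) * ((8 * D / L) ^ δ * ((rs / (8 * D)) ^ δ * L ^ δ)) := by ring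
      rw [h2, h1]
      congr 1
      field_simp
    have hne0 : ENNReal.ofReal (C ^ 2 * (8 * D / L) ^ δ) ≠ 0 := by
      refine (ENNReal.ofReal_pos.mpr ?_).ne'
      positivity
    have hnetop : ENNReal.ofReal (C ^ 2 * (8 * D / L) ^ δ) ≠ ∞ := ENNReal.ofReal_ne_top
    have : ENNReal.ofReal (C⁻¹ * rs ^ δ) < ENNReal.ofReal (C⁻¹ * rs ^ δ) := by
      calc ENNReal.ofReal (C⁻¹ * rs ^ δ) ≤
          ENNReal.ofReal (C ^ 2 * (8 * D / L) ^ δ) * ν U := hlow.trans hmain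
        _ < ENNReal.ofReal (C ^ 2 * (8 * D / L) ^ δ) *
            ENNReal.ofReal ((rs / (8 * D)) ^ δ / C ^ 3 * L ^ δ) := by
            exact (ENNReal.mul_lt_mul_iff_right hne0 hnetop).mpr hUlt
        _ = ENNReal.ofReal (C⁻¹ * rs ^ δ) := by
            rw [← ENNReal.ofReal_mul (by positivity), hfact]
    exact absurd this (lt_irrefl _)
  · -- upper bound
    set t : ℝ := min (r₀ / (6 * D * L)) (r₀ / 2) with htdef
    have ht0 : 0 < t := lt_min (by positivity) (by linarith)
    have ht3 : 3 * D * L * t < r₀ := by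
      calc 3 * D * L * t ≤ 3 * D * L * (r₀ / (6 * D * L)) := by
            exact mul_le_mul_of_nonneg_left (min_le_left _ _) (by positivity)
        _ = r₀ / 2 := by field_simp; ring
        _ < r₀ := by linarith
    have ht2 : t / 2 < r₀ := by
      have := min_le_right (r₀ / (6 * D * L)) (r₀ / 2)
      rw [← htdef] at this
      linarith
    obtain ⟨F, hFH, hFcov, hFsep⟩ :=
      sep_net ((isBounded_ball (x := y) (r := R)).subset hHR) ht0
    have hγzJ : ∀ z ∈ F, γ z ∈ J := fun z hz => hγH (mem_image_of_mem _ (hFH hz))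
    -- step 1: cover the image
    have hstep1 : ν (γ '' H) ≤ ∑ z ∈ F, ν (ball (γ z) (3 * D * L * t) ∩ J) := by
      refine le_trans (measure_mono ?_) (measure_biUnion_finset_le F _)
      rintro _ ⟨w, hw, rfl⟩
      obtain ⟨z, hzF, hz⟩ := Set.mem_iUnion₂.mp (hFcov hw)
      have hwz : dist w z < 2 * t := hz
      have hlip := (hbil w (hHR hw) z (hHR (hFH hzF))).2
      have : dist (γ w) (γ z) < 3 * D * L * t := by
        calc dist (γ w) (γ z) ≤ D * L * dist w z := hlip
          _ < D * L * (2 * t) := by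
              exact mul_lt_mul_of_pos_left hwz hDL
          _ < 3 * D * L * t := by nlinarith
      exact Set.mem_iUnion₂.mpr ⟨z, hzF, mem_ball.mpr this, hγH (mem_image_of_mem _ hw)⟩
    -- step 2: each ball bound
    have hstep2 : ∑ z ∈ F, ν (ball (γ z) (3 * D * L * t) ∩ J) ≤
        (F.card : ℝ≥0∞) * ENNReal.ofReal (C * (3 * D * L * t) ^ δ) := by
      rw [← nsmul_eq_mul]
      refine Finset.sum_le_card_nsmul F _ _ fun z hz => ?_
      exact (hAhl (γ z) (hγzJ z hz) _ (by positivity) ht3).2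
    -- step 4: cardinality bound
    have hstep4 : (F.card : ℝ≥0∞) * ENNReal.ofReal (C⁻¹ * (t / 2) ^ δ) ≤
        ENNReal.ofReal K := by
      have hdisj : (↑F : Set ℂ).PairwiseDisjoint fun z => ball z (t / 2) := by
        intro a ha b hb hab
        exact ball_disjoint_ball (by linarith [hFsep ha hb hab])
      set T : Set ℂ := toMeasurable ν (ball y (R + r₀) ∩ J) with hTdef
      have hsub2 : ∀ z ∈ F, ball z (t / 2) ∩ J ⊆ T ∩ ball z (t / 2) := by
        intro z hz x hx
        refine ⟨subset_toMeasurable ν _ ⟨?_, hx.2⟩, hx.1⟩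
        have h1 : dist x z < t / 2 := hx.1
        have h2 : dist z y < R := hHR (hFH hz)
        exact mem_ball.mpr (lt_of_le_of_lt (dist_triangle x z y) (by linarith))
      calc (F.card : ℝ≥0∞) * ENNReal.ofReal (C⁻¹ * (t / 2) ^ δ)
          = ∑ _z ∈ F, ENNReal.ofReal (C⁻¹ * (t / 2) ^ δ) := by
            rw [Finset.sum_const, nsmul_eq_mul]
        _ ≤ ∑ z ∈ F, ν (ball z (t / 2) ∩ J) := by
            refine Finset.sum_le_sum fun z hz => ?_
            exact (hAhl z (hHJ (hFH hz)) _ (by linarith) ht2).1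
        _ ≤ ∑ z ∈ F, ν (T ∩ ball z (t / 2)) := by
            exact Finset.sum_le_sum fun z hz => measure_mono (hsub2 z hz)
        _ = ν (⋃ z ∈ F, T ∩ ball z (t / 2)) := by
            refine (measure_biUnion_finset ?_ fun z _ => ?_).symm
            · exact hdisj.mono fun z => inter_subset_right
            · exact (measurableSet_toMeasurable ν _).inter measurableSet_ball
        _ ≤ ν T := measure_mono (Set.iUnion₂_subset fun z _ => inter_subset_left)
        _ = ν (ball y (R + r₀) ∩ J) := measure_toMeasurable _
        _ ≤ ENNReal.ofReal K := by
            rw [hKdef, hPdef]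
            exact grid hC0 hr₀ (fun z hz rr h1 h2 => (hAhl z hz rr h1 h2).2) y (R + r₀)
    -- combine
    have hfact : C * (3 * D * L * t) ^ δ = C⁻¹ * (t / 2) ^ δ * (C ^ 2 * (6 * D * L) ^ δ) := by
      have h1 : (3 * D * L * t) ^ δ = (t / 2) ^ δ * (6 * D * L) ^ δ := by
        rw [← Real.mul_rpow (by positivity) (by positivity)]
        congr 1
        ring
      rw [h1]
      have h2 : C⁻¹ * (t / 2) ^ δ * (C ^ 2 * (6 * D * L) ^ δ)
          = (C⁻¹ * C ^ 2) * ((t / 2) ^ δ * (6 * D * L) ^ δ) := by ring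
      rw [h2]
      congr 1
      field_simp [pow_two]
      try ring
    have hfinal : K * (C ^ 2 * (6 * D * L) ^ δ) = C ^ 2 * K * (6 * D) ^ δ * L ^ δ := by
      have h1 : (6 * D * L) ^ δ = (6 * D) ^ δ * L ^ δ :=
        Real.mul_rpow (by positivity) hL.le
      rw [h1]; ring
    calc ν (γ '' H) ≤ (F.card : ℝ≥0∞) * ENNReal.ofReal (C * (3 * D * L * t) ^ δ) :=
          hstep1.trans hstep2
      _ = (F.card : ℝ≥0∞) * ENNReal.ofReal (C⁻¹ * (t / 2) ^ δ) *
          ENNReal.ofReal (C ^ 2 * (6 * D * L) ^ δ) := by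
          rw [hfact, ENNReal.ofReal_mul (by positivity), ← mul_assoc]
      _ ≤ ENNReal.ofReal K * ENNReal.ofReal (C ^ 2 * (6 * D * L) ^ δ) :=
          mul_le_mul_left hstep4 _
      _ = ENNReal.ofReal (K * (C ^ 2 * (6 * D * L) ^ δ)) :=
          (ENNReal.ofReal_mul hKpos.le).symm
      _ = ENNReal.ofReal (C ^ 2 * K * (6 * D) ^ δ * L ^ δ) := by rw [hfinal]
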